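/- Let TA be a timed automaton and let I' be the invariant map of PUR(TA). Then every reachable state (l, ν) of TS(PUR(TA)) satisfies its location invariant: ν ⊨ I'(l). -/
import Mathlib


/-!
Framework for timed automata.  Clock valuations assign non-negative reals to
clocks.  Guards and location invariants are represented semantically, as
predicates on clock valuations.
-/

/-- Clock valuations: each clock gets a non-negative real. -/
abbrev Val (C : Type) := C → NNReal

/-- The valuation `ν₀` assigning `0` to every clock. -/
def zeroVal {C : Type} : Val C := fun _ => 0

open Classical in
/-- `ν[λ := 0]`: reset the clocks in `lam` to zero. -/
noncomputable def resetVal {C : Type} (ν : Val C) (lam : Set C) : Val C :=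
  fun x => if x ∈ lam then 0 else ν x

/-- `ν + δ`: advance every clock by `δ`. -/
def shift {C : Type} (ν : Val C) (δ : NNReal) : Val C := fun x => ν x + δ

/-- A timed automaton `TA = (L, L₀, L_u, Σ, CX, I, E)` with location type `L`,
action alphabet `A` and clock type `C`:  a set of initial locations (nonempty),
a set of urgent locations, an invariant map, and a set of edges
`(l, a, φ, λ, l')` consisting of source, action, guard, reset set and target. -/
structure TA (L A C : Type) where
  init : Set L
  init_nonempty : init.Nonempty
  urgent : Set L
  inv : L → Val C → Prop
  edges : Set (L × A × (Val C → Prop) × Set C × L)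

/-- States of the associated transition systems: location/valuation pairs. -/
abbrev State (L C : Type) := L × Val C

/-- Initial states: initial locations paired with the zero valuation. -/
def TA.initStates {L A C : Type} (T : TA L A C) : Set (State L C) :=
  {p | p.1 ∈ T.init ∧ p.2 = zeroVal}

/-- Baseline semantics `TS(TA)`.  Labels are `Sum.inl a` for actions `a ∈ Σ`
and `Sum.inr δ` for delays `δ ∈ ℝ≥0`.  Action transitions require the target
invariant to hold; delay transitions require the source location not to be
urgent and the invariant to hold throughout the delay. -/
def TS {L A C : Type} (T : TA L A C) :
    State L C → (A ⊕ NNReal) → State L C → Prop := fun p α q =>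
  match α with
  | Sum.inl a => ∃ φ lam, (p.1, a, φ, lam, q.1) ∈ T.edges ∧ φ p.2 ∧
      q.2 = resetVal p.2 lam ∧ T.inv q.1 q.2
  | Sum.inr δ => p.1 ∉ T.urgent ∧ q.1 = p.1 ∧ q.2 = shift p.2 δ ∧
      ∀ k ≤ δ, T.inv p.1 (shift p.2 k)

/-- Unsatisfied-invariants semantics `TS'(TA)`: like `TS(TA)` except action
transitions do not require the target invariant to hold. -/
def TS' {L A C : Type} (T : TA L A C) :
    State L C → (A ⊕ NNReal) → State L C → Prop := fun p α q =>
  match α with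
  | Sum.inl a => ∃ φ lam, (p.1, a, φ, lam, q.1) ∈ T.edges ∧ φ p.2 ∧
      q.2 = resetVal p.2 lam
  | Sum.inr δ => p.1 ∉ T.urgent ∧ q.1 = p.1 ∧ q.2 = shift p.2 δ ∧
      ∀ k ≤ δ, T.inv p.1 (shift p.2 k)

/-- Reachable states: smallest set containing the initial states and closed
under the transition relation. -/
inductive Reachable {S Λ : Type} (init : Set S) (tr : S → Λ → S → Prop) : S → Prop
  | base {s : S} : s ∈ init → Reachable init tr s
  | step {s : S} {α : Λ} {s' : S} :
      Reachable init tr s → tr s α s' → Reachable init tr s'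

/-- The construction `PUR(TA)`.  Locations are `L ⊕ L`: `Sum.inl l` is the
original location `l`, and `Sum.inr l` for `l ∈ L_B = {l ∈ L₀ | ν₀ ⊭ I(l)}`
plays the role of the fresh urgent copy `l_u ∈ F_u`.  Initial locations are
`(L₀ - L_B) ∪ F_u`, urgent locations are `L_u ∪ F_u`, the invariant of each
fresh copy is `true`, and the edges are the original ones together with copies
`(l_u, a, φ, λ, l'')` of each edge `(l, a, φ, λ, l'')` with `l ∈ L_B`. -/
noncomputable def PUR {L A C : Type} (T : TA L A C) : TA (L ⊕ L) A C where
  init := Sum.inl '' {l | l ∈ T.init ∧ T.inv l zeroVal} ∪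
          Sum.inr '' {l | l ∈ T.init ∧ ¬ T.inv l zeroVal}
  init_nonempty := by
    obtain ⟨l, hl⟩ := T.init_nonempty
    by_cases h : T.inv l zeroVal
    · exact ⟨Sum.inl l, Set.mem_union_left _ (Set.mem_image_of_mem _ ⟨hl, h⟩)⟩
    · exact ⟨Sum.inr l, Set.mem_union_right _ (Set.mem_image_of_mem _ ⟨hl, h⟩)⟩
  urgent := Sum.inl '' T.urgent ∪ Sum.inr '' {l | l ∈ T.init ∧ ¬ T.inv l zeroVal}
  inv := fun l' ν =>
    match l' with
    | Sum.inl l => T.inv l ν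
    | Sum.inr _ => True
  edges := { e | ∃ l a φ lam l', (l, a, φ, lam, l') ∈ T.edges ∧
      (e = (Sum.inl l, a, φ, lam, Sum.inl l') ∨
       (l ∈ T.init ∧ ¬ T.inv l zeroVal ∧ e = (Sum.inr l, a, φ, lam, Sum.inl l'))) }

/-- every reachable state `(l, ν)` of `TS(PUR(TA))` satisfies its
location invariant `ν ⊨ I'(l)`. -/
theorem statement_12 {L A C : Type} [Fintype L] [Fintype A] [Fintype C] [Nonempty C]
    (T : TA L A C) :
    ∀ q : State (L ⊕ L) C,
      Reachable (PUR T).initStates (TS (PUR T)) q → (PUR T).inv q.1 q.2 := by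
  intro q h
  induction h with
  | base hs =>
    obtain ⟨hmem, hz⟩ := hs
    rcases hmem with ⟨l, ⟨hl, hi⟩, he⟩ | ⟨l, ⟨hl, hi⟩, he⟩
    · simp [PUR, ← he, hz, hi]
    · simp [PUR, ← he]
  | step _ htr ih =>
    rename_i s α s' _
    match α with
    | Sum.inl a =>
      obtain ⟨φ, lam, _, _, _, hinv⟩ := htr
      exact hinv
    | Sum.inr δ =>
      obtain ⟨_, hq1, hq2, hall⟩ := htr
      rw [hq1, hq2]
      exact hall δ le_rfl
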